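/- The inequality (1−p)·x/(sin x) + p·x/(tan x) > 1 holds for all x in (0, π/2) if and only if p ≤ 1/3. -/

import Mathlib

/-!
Since `x / tan x = x cos x / sin x`, the inequality says `p · x (1 - cos x) < x - sin x`.
For `p ≤ 1/3` this is the Cusa–Huygens inequality `3 sin x < x (2 + cos x)`, which comes from
differentiating three times: `sin x - x cos x`, `2 (1 - cos x) - x sin x` and
`x (2 + cos x) - 3 sin x` vanish at `0`, and the derivative of each is the previous one
(the first has derivative `x sin x`), hence all are positive on `(0, π]`.
For `p > 1/3` it fails near `0`, where `x - sin x ≤ x³/6` but `p · x (1 - cos x) ≈ p x³/2`.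
-/

open Real

lemma pos_of_map_zero_of_deriv_pos {f f' : ℝ → ℝ} {a x : ℝ}
    (hf : ∀ y, HasDerivAt f (f' y) y) (hf0 : f 0 = 0) (hf' : ∀ y ∈ Set.Ioo 0 a, 0 < f' y)
    (hx0 : 0 < x) (hxa : x ≤ a) : 0 < f x := by
  have hmono : StrictMonoOn f (Set.Icc 0 a) :=
    strictMonoOn_of_deriv_pos (convex_Icc 0 a)
      (continuous_iff_continuousAt.2 fun y => (hf y).continuousAt).continuousOn fun y hy => by
        rw [(hf y).deriv]
        exact hf' y (by simpa using hy)
  simpa [hf0] using hmono ⟨le_rfl, hx0.le.trans hxa⟩ ⟨hx0.le, hxa⟩ hx0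

namespace Real

lemma mul_cos_lt_sin {x : ℝ} (hx0 : 0 < x) (hxπ : x ≤ π) : x * cos x < sin x := by
  have hderiv (y : ℝ) : HasDerivAt (fun y => sin y - y * cos y) (y * sin y) y :=
    ((hasDerivAt_sin y).sub ((hasDerivAt_id' y).mul (hasDerivAt_cos y))).congr_deriv (by ring)
  have := pos_of_map_zero_of_deriv_pos hderiv (by simp)
    (fun y hy => mul_pos hy.1 (sin_pos_of_pos_of_lt_pi hy.1 hy.2)) hx0 hxπ
  linarith

lemma mul_sin_lt_two_mul_one_sub_cos {x : ℝ} (hx0 : 0 < x) (hxπ : x ≤ π) :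
    x * sin x < 2 * (1 - cos x) := by
  have hderiv (y : ℝ) :
      HasDerivAt (fun y => 2 * (1 - cos y) - y * sin y) (sin y - y * cos y) y :=
    ((((hasDerivAt_cos y).const_sub 1).const_mul 2).sub
      ((hasDerivAt_id' y).mul (hasDerivAt_sin y))).congr_deriv (by ring)
  have := pos_of_map_zero_of_deriv_pos hderiv (by simp)
    (fun y hy => sub_pos.2 (mul_cos_lt_sin hy.1 hy.2.le)) hx0 hxπ
  linarith

theorem three_mul_sin_lt_mul_two_add_cos {x : ℝ} (hx0 : 0 < x) (hxπ : x ≤ π) :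
    3 * sin x < x * (2 + cos x) := by
  have hderiv (y : ℝ) :
      HasDerivAt (fun y => y * (2 + cos y) - 3 * sin y) (2 * (1 - cos y) - y * sin y) y :=
    (((hasDerivAt_id' y).mul ((hasDerivAt_cos y).const_add 2)).sub
      ((hasDerivAt_sin y).const_mul 3)).congr_deriv (by ring)
  have := pos_of_map_zero_of_deriv_pos hderiv (by simp)
    (fun y hy => sub_pos.2 (mul_sin_lt_two_mul_one_sub_cos hy.1 hy.2.le)) hx0 hxπ
  linarith

lemma sq_div_two_sub_le_one_sub_cos {x : ℝ} (hx : |x| ≤ 1) :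
    x ^ 2 / 2 - 5 / 96 * x ^ 4 ≤ 1 - cos x := by
  have := (abs_sub_le_iff.1 (cos_bound hx)).1
  have h4 : |x| ^ 4 = x ^ 4 := by rw [← abs_pow, abs_of_nonneg (by positivity)]
  linarith

end Real

lemma one_lt_add_div_sin_add_div_tan_iff (p : ℝ) {x : ℝ} (hx0 : 0 < x) (hxπ : x < π) :
    1 < (1 - p) * x / sin x + p * x / tan x ↔ p * (x * (1 - cos x)) < x - sin x := by
  rw [tan_eq_sin_div_cos, div_div_eq_mul_div, ← add_div,
    one_lt_div (sin_pos_of_pos_of_lt_pi hx0 hxπ)]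
  constructor <;> intro h <;> linarith

lemma exists_sub_sin_le_mul_one_sub_cos {p : ℝ} (hp : 1 / 3 < p) :
    ∃ x, 0 < x ∧ x < π / 2 ∧ x - sin x ≤ p * (x * (1 - cos x)) := by
  have hp0 : 0 < p := by linarith
  -- `x ≤ 1` makes `cos_bound` applicable, and `p x² ≤ 3p - 1` absorbs its error term.
  set x := min 1 ((3 * p - 1) / p)
  have hx0 : 0 < x := lt_min one_pos (div_pos (by linarith) hp0)
  have hx1 : x ≤ 1 := min_le_left _ _
  have hpx : p * x ≤ 3 * p - 1 := by
    rw [mul_comm, ← le_div_iff₀ hp0]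
    exact min_le_right _ _
  refine ⟨x, hx0, by linarith [pi_gt_three], ?_⟩
  have hsin := sin_ge_sub_cube hx0.le
  have hcos := sq_div_two_sub_le_one_sub_cos (abs_le.2 ⟨by linarith, hx1⟩)
  have hpx2 : p * x ^ 2 ≤ 3 * p - 1 := by nlinarith
  calc x - sin x ≤ x ^ 3 / 6 := by linarith
    _ ≤ p * x * (x ^ 2 / 2 - 5 / 96 * x ^ 4) := by nlinarith [pow_pos hx0 3]
    _ ≤ p * (x * (1 - cos x)) := by
      rw [← mul_assoc]
      exact mul_le_mul_of_nonneg_left hcos (by positivity)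

theorem huygens_type_p_circular_reciprocal (p : ℝ) :
    (∀ x : ℝ, 0 < x → x < π / 2 →
      (1 - p) * x / Real.sin x + p * x / Real.tan x > 1) ↔ p ≤ 1 / 3 := by
  have hπ : π / 2 < π := by linarith [pi_pos]
  constructor
  · intro h
    by_contra! hp
    obtain ⟨x, hx0, hx, hle⟩ := exists_sub_sin_le_mul_one_sub_cos hp
    exact hle.not_gt <| (one_lt_add_div_sin_add_div_tan_iff p hx0 (hx.trans hπ)).1 (h x hx0 hx)
  · intro hp x hx0 hx
    rw [gt_iff_lt, one_lt_add_div_sin_add_div_tan_iff p hx0 (hx.trans hπ)]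
    have hcos : 0 ≤ x * (1 - cos x) := mul_nonneg hx0.le (sub_nonneg.2 (cos_le_one x))
    calc p * (x * (1 - cos x)) ≤ 1 / 3 * (x * (1 - cos x)) := by gcongr
      _ < x - sin x := by linarith [three_mul_sin_lt_mul_two_add_cos hx0 (hx.trans hπ).le]
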